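/- arXiv:1507.08359 — 5 statements merged into one kernel-verified Lean document; each statement's English description precedes it below -/
import Mathlib

section
/- For an odd positive integer N and an even integer n not divisible by 2N, (2/N) * ∑_{k=1}^{(N-1)/2} sin(2πnk/N) = −(1/N) * tan(πn/(2N)). -/
/-!
Put `x = π n / (2N)` and `N = 2m + 1`. Multiplying the sum by `2 sin 2x` telescopes it:
`2 sin 2x · sin 4kx = cos (4k - 2)x - cos (4k + 2)x`, so the product equals
`cos 2x - cos (4m + 2)x = cos 2x - cos πn = cos 2x - 1 = -2 sin² x`, because `n` is even.
Dividing by `2 sin 2x = 4 sin x cos x` leaves `-tan x / 2`. When `sin 2x = 0` every term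
of the sum vanishes and `tan x = 0` as well (the latter through `c / 0 = 0` when `cos x = 0`).
-/

open Finset Real

lemma two_mul_sin_mul_sum_sin (s : ℝ) (m : ℕ) :
    2 * sin s * ∑ k ∈ Icc 1 m, sin (2 * k * s) = cos s - cos ((2 * m + 1) * s) := by
  induction m with
  | zero => simp
  | succ m ih =>
    have hstep : 2 * sin s * sin (2 * ((m + 1 : ℕ) : ℝ) * s)
        = cos ((2 * m + 1) * s) - cos ((2 * ((m + 1 : ℕ) : ℝ) + 1) * s) := by
      rw [two_mul_sin_mul_sin, ← cos_neg (s - _)]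
      push_cast
      ring_nf
    rw [sum_Icc_succ_top (by omega), mul_add, ih, hstep]
    ring

lemma sum_sin_of_sin_two_mul_eq_zero {x : ℝ} (hx : sin (2 * x) = 0) (m : ℕ) :
    ∑ k ∈ Icc 1 m, sin (4 * k * x) = 0 := by
  obtain ⟨j, hj⟩ := sin_eq_zero_iff.mp hx
  refine sum_eq_zero fun k _ => ?_
  rw [show 4 * (k : ℝ) * x = ((2 * k * j : ℤ) : ℝ) * π by
    push_cast; linear_combination -2 * (k : ℝ) * hj]
  exact sin_int_mul_pi _

lemma tan_eq_zero_of_sin_two_mul_eq_zero {x : ℝ} (hx : sin (2 * x) = 0) : tan x = 0 := by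
  rw [sin_two_mul, mul_assoc, mul_eq_zero, mul_eq_zero] at hx
  rcases hx with h2 | hsin | hcos
  · norm_num at h2
  · rw [tan_eq_sin_div_cos, hsin, zero_div]
  · rw [tan_eq_sin_div_cos, hcos, div_zero]

lemma sum_sin_eq_neg_tan_div_two {x : ℝ} {m : ℕ} (hx : cos ((4 * m + 2) * x) = 1) :
    ∑ k ∈ Icc 1 m, sin (4 * k * x) = -tan x / 2 := by
  by_cases hsin2 : sin (2 * x) = 0
  · rw [sum_sin_of_sin_two_mul_eq_zero hsin2, tan_eq_zero_of_sin_two_mul_eq_zero hsin2]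
    norm_num
  have hsin : sin x ≠ 0 := fun h => hsin2 (by rw [sin_two_mul, h]; ring)
  have hcos : cos x ≠ 0 := fun h => hsin2 (by rw [sin_two_mul, h]; ring)
  have htel := two_mul_sin_mul_sum_sin (2 * x) m
  simp only [show ∀ k : ℝ, 2 * k * (2 * x) = 4 * k * x by intro k; ring,
    show (2 * (m : ℝ) + 1) * (2 * x) = (4 * m + 2) * x by ring, hx, sin_two_mul, cos_two_mul,
    cos_sq'] at htel
  rw [tan_eq_sin_div_cos]
  field_simp
  apply mul_left_cancel₀ (mul_ne_zero two_ne_zero hsin)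
  linear_combination htel

theorem sin_partial_sum_even_n_general (N : ℕ) (hN : Odd N) (n : ℤ)
    (hneven : Even n) :
    (2 / (N : ℝ)) * ∑ k ∈ Finset.Icc 1 ((N - 1) / 2),
        Real.sin (2 * Real.pi * (n : ℝ) * (k : ℝ) / (N : ℝ))
      = -(1 / (N : ℝ)) * Real.tan (Real.pi * (n : ℝ) / (2 * (N : ℝ))) := by
  obtain ⟨m, rfl⟩ := hN
  obtain ⟨t, rfl⟩ := hneven
  set x := π * ((t + t : ℤ) : ℝ) / (2 * ((2 * m + 1 : ℕ) : ℝ))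
  have hterm (k : ℕ) : 2 * π * ((t + t : ℤ) : ℝ) * k / ((2 * m + 1 : ℕ) : ℝ) = 4 * k * x := by
    simp only [x]; push_cast; field_simp; ring
  have hend : cos ((4 * m + 2) * x) = 1 := by
    simp only [x]; push_cast
    rw [show (4 * m + 2 : ℝ) * (π * (t + t) / (2 * (2 * m + 1))) = t * (2 * π) by field_simp; ring]
    exact cos_int_mul_two_pi t
  simp only [hterm, Nat.add_sub_cancel, Nat.mul_div_cancel_left m two_pos,
    sum_sin_eq_neg_tan_div_two hend]
  ring

theorem sin_partial_sum_even_n (N : ℕ) (hN : Odd N) (hNpos : 0 < N) (n : ℤ)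
    (hneven : Even n) (hn : ¬ ((2 * (N : ℤ)) ∣ n)) :
    (2 / (N : ℝ)) * ∑ k ∈ Finset.Icc 1 ((N - 1) / 2),
        Real.sin (2 * Real.pi * (n : ℝ) * (k : ℝ) / (N : ℝ))
      = -(1 / (N : ℝ)) * Real.tan (Real.pi * (n : ℝ) / (2 * (N : ℝ))) :=
  sin_partial_sum_even_n_general N hN n hneven
end

section
/- Let N be an odd positive integer and define d : ℤ/N → ℝ by d_n = (1/N)·cot(πn/(2N)) if n is odd, and d_n = −(1/N)·tan(πn/(2N)) if n is even, where n is represented by an integer in {0,…,N−1} (with d_0 = 0). Then the discrete Fourier transform of d satisfies (F d)_k = −i·sgn~(k), where sgn~(k) = 0 if k = 0, sgn~(k) = 1 if 1 ≤ k ≤ (N−1)/2, and sgn~(k) = −1 if (N+1)/2 ≤ k ≤ N−1. -/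
open Finset

/-- The kernel of the discrete Hilbert transform for odd `N`. -/
noncomputable def benjaminKernel (N : ℕ) (n : ZMod N) : ℝ :=
  if Odd n.val then (1 / (N : ℝ)) * Real.cot (Real.pi * (n.val : ℝ) / (2 * (N : ℝ)))
  else -(1 / (N : ℝ)) * Real.tan (Real.pi * (n.val : ℝ) / (2 * (N : ℝ)))

/-- The discrete sign symbol for odd `N`. -/
def sgnTilde (N : ℕ) (k : ZMod N) : ℝ :=
  if k.val = 0 then 0 else if k.val ≤ (N - 1) / 2 then 1 else -1

/-- The discrete Fourier transform of `u : ZMod N → ℂ`. -/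
noncomputable def dft (N : ℕ) [NeZero N] (u : ZMod N → ℂ) (k : ZMod N) : ℂ :=
  ∑ n : ZMod N, u n * Complex.exp (-2 * Real.pi * Complex.I * (n.val : ℂ) * (k.val : ℂ) / (N : ℂ))

/-! With `N = 2M + 1`, the kernel is the inverse discrete Fourier transform of `-i·sgn~`:
pairing the frequencies `j` and `N - j` turns `∑ⱼ -i·sgn~(j)·e^{2πijn/N}` into
`2 ∑_{j=1}^{M} sin(2πjn/N)`.
Multiplied by `2 sin(πn/N)` this sine sum telescopes to `cos(πn/N) - cos(πn)`, and the sign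
`cos(πn) = (-1)ⁿ` is what produces `cot` for odd `n` and `-tan` for even `n`.
Fourier inversion on `ZMod N` then gives the claim. -/

open Real
open Complex (I)
open scoped ZMod Complex

lemma sum_range_sin_mul_two_sin (θ : ℝ) (M : ℕ) :
    (∑ j ∈ range M, sin ((j + 1) * θ)) * (2 * sin (θ / 2))
      = cos (θ / 2) - cos ((2 * M + 1) * (θ / 2)) := by
  induction M with
  | zero => simp
  | succ M ih =>
    have step : sin ((M + 1) * θ) * (2 * sin (θ / 2))
        = cos ((2 * M + 1) * (θ / 2)) - cos ((2 * M + 3) * (θ / 2)) := by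
      rw [cos_sub_cos,
        show ((2 * M + 1) * (θ / 2) - (2 * M + 3) * (θ / 2)) / 2 = -(θ / 2) by ring, sin_neg]
      ring_nf
    rw [sum_range_succ, add_mul, ih, step]
    push_cast
    ring_nf

lemma two_mul_sum_range_sin_eq_cot {b : ℝ} {M : ℕ} (hsin : sin b ≠ 0) (hcos : cos b ≠ 0)
    (h : cos ((2 * M + 1) * (2 * b)) = -1) :
    2 * ∑ j ∈ range M, sin ((j + 1) * (4 * b)) = cot b := by
  have key := sum_range_sin_mul_two_sin (4 * b) M
  rw [show 4 * b / 2 = 2 * b by ring, h, sin_two_mul, cos_two_mul] at key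
  rw [cot_eq_cos_div_sin, eq_div_iff hsin]
  apply mul_left_cancel₀ hcos
  linear_combination key / 2

lemma two_mul_sum_range_sin_eq_neg_tan {b : ℝ} {M : ℕ} (hsin : sin b ≠ 0) (hcos : cos b ≠ 0)
    (h : cos ((2 * M + 1) * (2 * b)) = 1) :
    2 * ∑ j ∈ range M, sin ((j + 1) * (4 * b)) = -tan b := by
  have key := sum_range_sin_mul_two_sin (4 * b) M
  rw [show 4 * b / 2 = 2 * b by ring, h, sin_two_mul, cos_two_mul] at key
  rw [tan_eq_sin_div_cos, ← neg_div, eq_div_iff hcos]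
  apply mul_left_cancel₀ hsin
  linear_combination key / 2 + sin_sq_add_cos_sq b

lemma benjaminKernel_mul_eq_two_mul_sum_sin (M : ℕ) (n : ZMod (2 * M + 1)) :
    benjaminKernel (2 * M + 1) n * (2 * M + 1)
      = 2 * ∑ j ∈ range M, sin ((j + 1) * (2 * π * n.val / (2 * M + 1))) := by
  rcases eq_or_ne n 0 with rfl | hn
  · simp [benjaminKernel]
  set b := π * n.val / (2 * (2 * M + 1)) with hb
  have hb_pos : 0 < b := by
    have : 0 < n.val := ZMod.val_pos.2 hn
    positivity
  have hb_lt : b < π / 2 := by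
    have : (n.val : ℝ) < 2 * M + 1 := by exact_mod_cast ZMod.val_lt n
    rw [hb, div_lt_div_iff₀ (by positivity) two_pos]
    nlinarith [pi_pos]
  have hsin : sin b ≠ 0 := (sin_pos_of_pos_of_lt_pi hb_pos (by linarith [pi_pos])).ne'
  have hcos : cos b ≠ 0 := (cos_pos_of_mem_Ioo ⟨by linarith, hb_lt⟩).ne'
  have hcos_mul : cos ((2 * M + 1) * (2 * b)) = (-1) ^ n.val := by
    rw [← cos_nat_mul_pi, hb]
    field_simp
  have h4b : 2 * π * n.val / (2 * M + 1) = 4 * b := by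
    rw [hb]
    field_simp
    ring
  rw [h4b, benjaminKernel]
  push_cast
  rw [← hb]
  split_ifs with hodd
  · rw [two_mul_sum_range_sin_eq_cot hsin hcos (by rw [hcos_mul, hodd.neg_one_pow])]
    field_simp
  · rw [two_mul_sum_range_sin_eq_neg_tan hsin hcos
      (by rw [hcos_mul, (Nat.not_odd_iff_even.1 hodd).neg_one_pow])]
    field_simp

lemma ZMod.sum_eq_sum_range {N : ℕ} [NeZero N] {R : Type*} [AddCommMonoid R] (f : ZMod N → R) :
    ∑ j, f j = ∑ j ∈ range N, f j :=
  sum_nbij' ZMod.val Nat.cast (fun j _ ↦ mem_range.2 j.val_lt) (fun _ _ ↦ mem_univ _)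
    (fun j _ ↦ ZMod.natCast_zmod_val j) (fun _ hj ↦ ZMod.val_cast_of_lt (mem_range.1 hj))
    (fun j _ ↦ by rw [ZMod.natCast_zmod_val])

lemma Finset.sum_range_two_mul_add_one {R : Type*} [AddCommMonoid R] (g : ℕ → R) (M : ℕ) :
    ∑ j ∈ range (2 * M + 1), g j = g 0 + ∑ i ∈ range M, (g (i + 1) + g (2 * M - i)) := by
  rw [sum_range_succ', two_mul, sum_range_add, sum_add_distrib, add_comm (g 0),
    ← sum_range_reflect (fun i ↦ g (M + i + 1)) M]
  congr 2
  refine sum_congr rfl fun i hi ↦ ?_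
  rw [mem_range] at hi
  congr 1
  omega

lemma Complex.exp_mul_I_sub_exp_neg_mul_I (x : ℂ) :
    cexp (x * I) - cexp (-x * I) = 2 * I * Complex.sin x := by
  linear_combination -I * Complex.two_sin x - (cexp (-x * I) - cexp (x * I)) * Complex.I_sq

lemma sgnTilde_natCast (M : ℕ) {j : ℕ} (hj : j < 2 * M + 1) :
    sgnTilde (2 * M + 1) j = if j = 0 then 0 else if j ≤ M then 1 else -1 := by
  rw [sgnTilde, ZMod.val_cast_of_lt hj, show (2 * M + 1 - 1) / 2 = M by omega]

lemma sum_stdAddChar_mul_sgnTilde (M : ℕ) (n : ZMod (2 * M + 1)) :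
    ∑ j : ZMod (2 * M + 1), ZMod.stdAddChar (j * n) * (sgnTilde (2 * M + 1) j : ℂ)
      = I * ↑(2 * ∑ j ∈ range M, sin ((j + 1) * (2 * π * n.val / (2 * M + 1)))) := by
  set θ := 2 * π * n.val / (2 * M + 1) with hθ
  have hchar (j : ℕ) : ZMod.stdAddChar ((j : ZMod (2 * M + 1)) * n) = cexp (↑(j * θ) * I) := by
    rw [← ZMod.natCast_zmod_val n, ← Nat.cast_mul, ZMod.stdAddChar_apply, ZMod.toCircle_natCast,
      hθ]
    push_cast
    ring_nf
  have hperiod (i : ℕ) (hi : i < M) :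
      cexp (↑((2 * M - i : ℕ) * θ) * I) = cexp (-↑((i + 1) * θ) * I) := by
    have hθN : ((2 * M - i : ℕ) : ℝ) * θ = -((i + 1) * θ) + n.val * (2 * π) := by
      rw [hθ, Nat.cast_sub (by omega)]
      field_simp
      push_cast
      ring
    rw [hθN, Complex.ofReal_add, add_mul, Complex.exp_add, Complex.ofReal_neg]
    push_cast
    rw [mul_assoc (n.val : ℂ), Complex.exp_nat_mul_two_pi_mul_I, mul_one]
  rw [ZMod.sum_eq_sum_range, sum_range_two_mul_add_one, Complex.ofReal_mul, Complex.ofReal_sum,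
    mul_sum, mul_sum]
  simp only [hchar]
  rw [sgnTilde_natCast M (Nat.succ_pos _), if_pos rfl, Complex.ofReal_zero, mul_zero, zero_add]
  refine sum_congr rfl fun i hi ↦ ?_
  rw [mem_range] at hi
  rw [sgnTilde_natCast M (by omega), sgnTilde_natCast M (by omega), if_neg (by omega),
    if_pos (by omega), if_neg (by omega), if_neg (by omega), hperiod i hi]
  push_cast
  linear_combination Complex.exp_mul_I_sub_exp_neg_mul_I ((i + 1) * θ)

lemma benjaminKernel_eq_invDFT (M : ℕ) :
    (fun n ↦ (benjaminKernel (2 * M + 1) n : ℂ))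
      = 𝓕⁻ fun k ↦ -I * (sgnTilde (2 * M + 1) k : ℂ) := by
  ext n
  simp_rw [ZMod.invDFT_apply, smul_eq_mul, mul_left_comm _ (-I), ← mul_sum,
    sum_stdAddChar_mul_sgnTilde, ← benjaminKernel_mul_eq_two_mul_sum_sin]
  rw [← mul_assoc (-I), neg_mul, Complex.I_mul_I, neg_neg, one_mul]
  have hN : (2 * M + 1 : ℂ) ≠ 0 := by exact_mod_cast (2 * M).succ_ne_zero
  push_cast
  field_simp

lemma dft_eq_zmod_dft (N : ℕ) [NeZero N] (u : ZMod N → ℂ) : dft N u = 𝓕 u := by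
  ext k
  rw [dft, ZMod.dft_apply]
  refine sum_congr rfl fun j _ ↦ ?_
  have hneg : -(j * k) = Int.cast (-(j.val * k.val : ℤ)) := by
    push_cast
    rw [ZMod.natCast_zmod_val, ZMod.natCast_zmod_val]
  rw [smul_eq_mul, mul_comm, hneg, ZMod.stdAddChar_coe]
  push_cast
  ring_nf

theorem dft_benjaminKernel (N : ℕ) [NeZero N] (hN : Odd N) (k : ZMod N) :
    dft N (fun n => ((benjaminKernel N n : ℝ) : ℂ)) k = -Complex.I * (sgnTilde N k : ℂ) := by
  obtain ⟨M, rfl⟩ := hN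
  rw [dft_eq_zmod_dft, benjaminKernel_eq_invDFT, LinearEquiv.apply_symm_apply]
end

section
/- Let N be an odd positive integer and define the discrete Hilbert transform H_Δ on sequences u : ℤ/N → ℂ as the circular convolution (H_Δ u)_n = ∑_{j=0}^{N−1} d_{n−j} u_j, where d_n = (1/N)·cot(πn/(2N)) for odd n in {1,…,N−1}, d_n = −(1/N)·tan(πn/(2N)) for even n in {1,…,N−1}, and d_0 = 0. Then H_Δ u = F^{−1}(−i·S_odd · (F u)), where F is the discrete Fourier transform and S_odd is multiplication by the diagonal sequence (0, 1,…,1, −1,…,−1) with (N−1)/2 ones followed by (N−1)/2 negative ones. -/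
open Finset

/-- The inverse discrete Fourier transform of `v : ZMod N → ℂ`. -/
noncomputable def idft (N : ℕ) [NeZero N] (v : ZMod N → ℂ) (n : ZMod N) : ℂ :=
  (1 / (N : ℂ)) *
    ∑ k : ZMod N, v k * Complex.exp (2 * Real.pi * Complex.I * (n.val : ℂ) * (k.val : ℂ) / (N : ℂ))

/-- The discrete Hilbert transform: circular convolution with the kernel. -/
noncomputable def discreteHilbert (N : ℕ) [NeZero N] (u : ZMod N → ℂ) (n : ZMod N) : ℂ :=
  ∑ j : ZMod N, ((benjaminKernel N (n - j) : ℝ) : ℂ) * u j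

/-! With `z = exp (π i m / N)`, the inverse DFT of the symbol `-i · sgnTilde` at `m` is `-i/N`
times a signed geometric sum in `z²`. Since the geometric sum over a full period vanishes, this
equals `2 (z^(N+1) - 1) / (z² - 1) - 1`, and `z^N = (-1)^m` turns it into `(1 + z)/(1 - z)` for
odd `m` and `(1 - z)/(1 + z)` for even `m`: exactly the exponential forms of `cot` and `-tan` of
`π m / (2N)`. So the kernel is the inverse DFT of the symbol, and the theorem is the convolution
theorem for the DFT. -/

open Complex

theorem ZMod.sum_comp_val_eq_sum_range {R : Type*} [AddCommMonoid R] (N : ℕ) [NeZero N]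
    (f : ℕ → R) : ∑ k : ZMod N, f k.val = ∑ k ∈ range N, f k := by
  obtain ⟨n, rfl⟩ := Nat.exists_eq_succ_of_ne_zero (NeZero.ne N)
  exact Fin.sum_univ_eq_sum_range f _

section SignSums

variable {N M : ℕ} [NeZero N]

theorem sum_sgnTilde_mul (hN : N = 2 * M + 1) (f : ℕ → ℂ) :
    ∑ k : ZMod N, (sgnTilde N k : ℂ) * f k.val
      = ∑ k ∈ Ico 1 (M + 1), f k - ∑ k ∈ Ico (M + 1) N, f k := by
  have hM : (N - 1) / 2 = M := by omega
  have hval : ∑ k ∈ range N, ((if k = 0 then 0 else if k ≤ M then 1 else -1 : ℝ) : ℂ) * f k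
      = ∑ k : ZMod N, (sgnTilde N k : ℂ) * f k.val := by
    rw [← hM]
    exact (ZMod.sum_comp_val_eq_sum_range N _).symm
  rw [← hval, ← sum_range_add_sum_Ico _ (by omega : M + 1 ≤ N), range_eq_Ico,
    sum_eq_sum_Ico_succ_bot (by omega : 0 < M + 1), sub_eq_add_neg, ← sum_neg_distrib]
  congr 1
  · rw [if_pos rfl, ofReal_zero, zero_mul, zero_add]
    refine sum_congr rfl fun k hk => ?_
    rw [mem_Ico] at hk
    rw [if_neg (by omega), if_pos (by omega), ofReal_one, one_mul]
  · refine sum_congr rfl fun k hk => ?_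
    rw [mem_Ico] at hk
    rw [if_neg (by omega), if_neg (by omega), ofReal_neg, ofReal_one, neg_one_mul]

theorem sum_sgnTilde_eq_zero (hN : N = 2 * M + 1) : ∑ k : ZMod N, (sgnTilde N k : ℂ) = 0 := by
  simpa [hN, show 2 * M - M = M by omega] using sum_sgnTilde_mul hN (fun _ => 1)

theorem sum_sgnTilde_mul_pow (hN : N = 2 * M + 1) {w : ℂ} (hw : w ≠ 1) (hwN : w ^ N = 1) :
    ∑ k : ZMod N, (sgnTilde N k : ℂ) * w ^ k.val = 2 * (w ^ (M + 1) - 1) / (w - 1) - 1 := by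
  rw [sum_sgnTilde_mul hN, sum_Ico_eq_sub _ (by omega), sum_Ico_eq_sub _ (by omega),
    geom_sum_eq hw N, hwN, geom_sum_eq hw, sum_range_one, pow_zero]
  have hw_sub : w - 1 ≠ 0 := sub_ne_zero.mpr hw
  field_simp
  ring

theorem sum_sgnTilde_mul_sq_pow_of_pow_eq_one (hN : N = 2 * M + 1) {z : ℂ} (hzN : z ^ N = 1) :
    ∑ k : ZMod N, (sgnTilde N k : ℂ) * (z ^ 2) ^ k.val = (1 - z) / (1 + z) := by
  rcases eq_or_ne z 1 with rfl | hz_one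
  · simp [sum_sgnTilde_eq_zero hN]
  have hz_neg_one : z ≠ -1 := by
    rintro rfl
    rw [hN, Odd.neg_one_pow ⟨M, rfl⟩] at hzN
    norm_num at hzN
  have hz_sq : z ^ 2 ≠ 1 := sq_eq_one_iff.not.mpr (not_or.mpr ⟨hz_one, hz_neg_one⟩)
  have hz_sq_sub : z ^ 2 - 1 ≠ 0 := sub_ne_zero.mpr hz_sq
  have hz_add : 1 + z ≠ 0 := fun h => hz_neg_one (eq_neg_of_add_eq_zero_right h)
  rw [sum_sgnTilde_mul_pow hN hz_sq (by rw [← pow_mul, mul_comm, pow_mul, hzN, one_pow]),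
    show (z ^ 2) ^ (M + 1) = z ^ N * z by rw [hN]; ring, hzN]
  field_simp
  ring

theorem sum_sgnTilde_mul_sq_pow_of_pow_eq_neg_one (hN : N = 2 * M + 1) {z : ℂ}
    (hzN : z ^ N = -1) :
    ∑ k : ZMod N, (sgnTilde N k : ℂ) * (z ^ 2) ^ k.val = (1 + z) / (1 - z) := by
  rcases eq_or_ne z (-1) with rfl | hz_neg_one
  · simp [sum_sgnTilde_eq_zero hN]
  have hz_one : z ≠ 1 := by
    rintro rfl
    norm_num at hzN
  have hz_sq : z ^ 2 ≠ 1 := sq_eq_one_iff.not.mpr (not_or.mpr ⟨hz_one, hz_neg_one⟩)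
  have hz_sq_sub : z ^ 2 - 1 ≠ 0 := sub_ne_zero.mpr hz_sq
  have hz_sub : 1 - z ≠ 0 := sub_ne_zero.mpr hz_one.symm
  rw [sum_sgnTilde_mul_pow hN hz_sq (by rw [← pow_mul, mul_comm, pow_mul, hzN, neg_one_sq]),
    show (z ^ 2) ^ (M + 1) = z ^ N * z by rw [hN]; ring, hzN]
  field_simp
  ring

end SignSums

theorem Complex.tan_eq_exp_ratio (x : ℂ) :
    tan x = I * (1 - exp (2 * I * x)) / (exp (2 * I * x) + 1) := by
  rw [tan_eq_sin_div_cos, ← inv_div, ← cot_eq_cos_div_sin, cot_eq_exp_ratio, inv_div]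

section Convolution
variable {N : ℕ} [NeZero N]

theorem exp_two_pi_I_val_mul_val (n k : ZMod N) :
    exp (2 * Real.pi * I * n.val * k.val / N) = ZMod.stdAddChar (n * k) := by
  rw [ZMod.stdAddChar_apply, show n * k = ((n.val * k.val : ℕ) : ZMod N) by simp,
    ZMod.toCircle_natCast]
  push_cast
  ring_nf

theorem exp_two_pi_I_sub_val_mul_val (n j k : ZMod N) :
    exp (2 * Real.pi * I * (n - j).val * k.val / N)
      = exp (2 * Real.pi * I * n.val * k.val / N) * exp (-2 * Real.pi * I * j.val * k.val / N) := by
  rw [show -2 * Real.pi * I * j.val * k.val / N = -(2 * Real.pi * I * j.val * k.val / N) by ring,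
    exp_neg, exp_two_pi_I_val_mul_val, exp_two_pi_I_val_mul_val, exp_two_pi_I_val_mul_val, sub_mul,
    AddChar.map_sub_eq_div, div_eq_mul_inv]

theorem sum_idft_sub_mul_eq_idft_mul_dft (σ u : ZMod N → ℂ) (n : ZMod N) :
    ∑ j, idft N σ (n - j) * u j = idft N (fun k => σ k * dft N u k) n := by
  simp only [idft, dft, exp_two_pi_I_sub_val_mul_val, mul_sum, sum_mul]
  rw [sum_comm]
  exact sum_congr rfl fun k _ => sum_congr rfl fun j _ => by ring

end Convolution

theorem benjaminKernel_eq_idft {N : ℕ} [NeZero N] (hN : Odd N) (m : ZMod N) :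
    (benjaminKernel N m : ℂ) = idft N (fun k => -I * sgnTilde N k) m := by
  obtain ⟨M, hM⟩ := hN
  have hN0 : (N : ℂ) ≠ 0 := Nat.cast_ne_zero.mpr (NeZero.ne N)
  set z := exp (Real.pi * I * m.val / N) with hz
  have hpow (k : ℕ) : exp (2 * Real.pi * I * m.val * k / N) = (z ^ 2) ^ k := by
    rw [← exp_nat_mul, ← exp_nat_mul]
    ring_nf
  have hzN : z ^ N = (-1) ^ m.val := by
    rw [← exp_nat_mul, show (N : ℂ) * (Real.pi * I * m.val / N) = m.val * (Real.pi * I) by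
      field_simp, exp_nat_mul, exp_pi_mul_I]
  have hexp : exp (2 * I * (Real.pi * m.val / (2 * N))) = z := by
    rw [hz]
    congr 1
    ring
  simp only [idft, hpow]
  simp only [mul_assoc, ← mul_sum]
  rcases Nat.even_or_odd m.val with hm | hm
  · rw [sum_sgnTilde_mul_sq_pow_of_pow_eq_one hM (hzN.trans hm.neg_one_pow), benjaminKernel,
      if_neg (Nat.not_odd_iff_even.mpr hm)]
    push_cast [ofReal_tan]
    rw [tan_eq_exp_ratio, hexp]
    ring
  · rw [sum_sgnTilde_mul_sq_pow_of_pow_eq_neg_one hM (hzN.trans hm.neg_one_pow), benjaminKernel,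
      if_pos hm]
    push_cast [ofReal_cot]
    rw [cot_eq_exp_ratio, hexp, mul_comm I, ← div_div, div_I]
    ring

theorem discreteHilbert_eq_idft_sgn_dft (N : ℕ) [NeZero N] (hN : Odd N) (u : ZMod N → ℂ) :
    discreteHilbert N u
      = idft N (fun k => -Complex.I * (sgnTilde N k : ℂ) * dft N u k) := by
  funext n
  simp only [discreteHilbert, benjaminKernel_eq_idft hN]
  exact sum_idft_sub_mul_eq_idft_mul_dft _ u n
end

section
/- Let M, K be real skew-symmetric d×d matrices, S : ℝ^d → ℝ a smooth function, and z : ℝ² → ℝ^d a smooth solution of M z_t + K z_x = ∇S(z). Then the local energy conservation law ∂_t E(z) + ∂_x F(z) = 0 holds, where E(z) = S(z) + (1/2) z_xᵀ K z and F(z) = −(1/2) z_tᵀ K z. -/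
open Matrix

private lemma hasDerivAt_proj {d : ℕ} {a : ℝ → Fin d → ℝ} {a' : Fin d → ℝ} {t : ℝ}
    (ha : HasDerivAt a a' t) (i : Fin d) :
    HasDerivAt (fun s => a s i) (a' i) t :=
  (ContinuousLinearMap.proj (R := ℝ) (φ := fun _ : Fin d => ℝ) i).hasFDerivAt.comp_hasDerivAt t ha

private lemma hasDerivAt_dotK {d : ℕ} (K : Matrix (Fin d) (Fin d) ℝ)
    {a b : ℝ → Fin d → ℝ} {a' b' : Fin d → ℝ} {t : ℝ}
    (ha : HasDerivAt a a' t) (hb : HasDerivAt b b' t) :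
    HasDerivAt (fun s => a s ⬝ᵥ (K *ᵥ b s))
      (a' ⬝ᵥ (K *ᵥ b t) + a t ⬝ᵥ (K *ᵥ b')) t := by
  simp only [dotProduct, Matrix.mulVec]
  rw [← Finset.sum_add_distrib]
  apply HasDerivAt.fun_sum
  intro i _
  have hbi : HasDerivAt (fun s => (fun j => K i j) ⬝ᵥ b s) ((fun j => K i j) ⬝ᵥ b') t := by
    simp only [dotProduct]
    apply HasDerivAt.fun_sum
    intro j _
    exact (hasDerivAt_proj hb j).const_mul (K i j)
  exact (hasDerivAt_proj ha i).mul hbi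

private lemma skew_dot {d : ℕ} {K : Matrix (Fin d) (Fin d) ℝ} (hK : Kᵀ = -K)
    (v w : Fin d → ℝ) : v ⬝ᵥ (K *ᵥ w) = -(w ⬝ᵥ (K *ᵥ v)) := by
  rw [Matrix.dotProduct_mulVec, ← Matrix.mulVec_transpose, hK, Matrix.neg_mulVec,
    neg_dotProduct, dotProduct_comm]

theorem multisymplectic_local_energy_conservation (d : ℕ)
    (M K : Matrix (Fin d) (Fin d) ℝ) (hM : Mᵀ = -M) (hK : Kᵀ = -K)
    (S : (Fin d → ℝ) → ℝ) (hS : ContDiff ℝ (⊤ : ℕ∞) S)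
    (gradS : (Fin d → ℝ) → (Fin d → ℝ))
    (hgrad : ∀ v w, fderiv ℝ S v w = gradS v ⬝ᵥ w)
    (z : ℝ → ℝ → (Fin d → ℝ)) (hz : ContDiff ℝ (⊤ : ℕ∞) (fun p : ℝ × ℝ => z p.1 p.2))
    (heq : ∀ t x,
      M *ᵥ (deriv (fun s => z s x) t) + K *ᵥ (deriv (fun y => z t y) x) = gradS (z t x)) :
    ∀ t x,
      deriv (fun s => S (z s x) +
          (1 / 2) * ((deriv (fun y => z s y) x) ⬝ᵥ (K *ᵥ z s x))) t
        + deriv (fun y => -(1 / 2) * ((deriv (fun s => z s y) t) ⬝ᵥ (K *ᵥ z t y))) x = 0 := by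
  intro t x
  set g : ℝ × ℝ → (Fin d → ℝ) := fun p => z p.1 p.2 with hg
  have hgdiff : ∀ p, HasFDerivAt g (fderiv ℝ g p) p :=
    fun p => (hz.differentiable (by simp) p).hasFDerivAt
  have hg' : ContDiff ℝ (⊤ : ℕ∞) (fderiv ℝ g) := hz.fderiv_right (by simp)
  -- partial derivatives
  set zt : ℝ × ℝ → (Fin d → ℝ) := fun p => fderiv ℝ g p (1, 0) with hzt
  set zx : ℝ × ℝ → (Fin d → ℝ) := fun p => fderiv ℝ g p (0, 1) with hzx
  have hcurve_t : ∀ (a : ℝ) (b : ℝ), HasDerivAt (fun s => z s b) (zt (a, b)) a := by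
    intro a b
    have h1 : HasDerivAt (fun s : ℝ => (s, b)) ((1 : ℝ), (0 : ℝ)) a := by
      simpa using (HasDerivAt.prodMk (hasDerivAt_id a) (hasDerivAt_const a b))
    exact (hgdiff (a, b)).comp_hasDerivAt a h1
  have hcurve_x : ∀ (a : ℝ) (b : ℝ), HasDerivAt (fun y => z a y) (zx (a, b)) b := by
    intro a b
    have h1 : HasDerivAt (fun y : ℝ => (a, y)) ((0 : ℝ), (1 : ℝ)) b := by
      simpa using (HasDerivAt.prodMk (hasDerivAt_const b a) (hasDerivAt_id b))
    exact (hgdiff (a, b)).comp_hasDerivAt b h1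
  -- second derivative at (t,x)
  set g'' := fderiv ℝ (fderiv ℝ g) (t, x) with hg''
  have hg''at : HasFDerivAt (fderiv ℝ g) g'' (t, x) :=
    (hg'.differentiable (by simp) (t, x)).hasFDerivAt
  have hsymm : g'' (1, 0) (0, 1) = g'' (0, 1) (1, 0) :=
    second_derivative_symmetric hgdiff hg''at _ _
  -- derivative of s ↦ zx (s, x)
  have hzx_t : HasDerivAt (fun s => zx (s, x)) (g'' (1, 0) (0, 1)) t := by
    have h1 : HasDerivAt (fun s : ℝ => (s, x)) ((1 : ℝ), (0 : ℝ)) t := by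
      simpa using (HasDerivAt.prodMk (hasDerivAt_id t) (hasDerivAt_const t x))
    have h2 : HasDerivAt (fun s => fderiv ℝ g (s, x)) (g'' (1, 0)) t :=
      hg''at.comp_hasDerivAt t h1
    simpa using h2.clm_apply (hasDerivAt_const t ((0 : ℝ), (1 : ℝ)))
  have hzt_x : HasDerivAt (fun y => zt (t, y)) (g'' (0, 1) (1, 0)) x := by
    have h1 : HasDerivAt (fun y : ℝ => (t, y)) ((0 : ℝ), (1 : ℝ)) x := by
      simpa using (HasDerivAt.prodMk (hasDerivAt_const x t) (hasDerivAt_id x))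
    have h2 : HasDerivAt (fun y => fderiv ℝ g (t, y)) (g'' (0, 1)) x :=
      hg''at.comp_hasDerivAt x h1
    simpa using h2.clm_apply (hasDerivAt_const x ((1 : ℝ), (0 : ℝ)))
  set w : Fin d → ℝ := g'' (1, 0) (0, 1) with hw
  -- rewrite the two functions being differentiated
  have hfun1 : (fun s => S (z s x) +
      (1 / 2) * ((deriv (fun y => z s y) x) ⬝ᵥ (K *ᵥ z s x)))
      = fun s => S (z s x) + (1 / 2) * (zx (s, x) ⬝ᵥ (K *ᵥ z s x)) := by
    funext s
    rw [(hcurve_x s x).deriv]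
  have hfun2 : (fun y => -(1 / 2) * ((deriv (fun s => z s y) t) ⬝ᵥ (K *ᵥ z t y)))
      = fun y => -(1 / 2) * (zt (t, y) ⬝ᵥ (K *ᵥ z t y)) := by
    funext y
    rw [(hcurve_t t y).deriv]
  -- derivative of S ∘ (z · x)
  have hScomp : HasDerivAt (fun s => S (z s x)) (gradS (z t x) ⬝ᵥ zt (t, x)) t := by
    have h1 : HasDerivAt (fun s => S (z s x)) (fderiv ℝ S (z t x) (zt (t, x))) t :=
      (hS.differentiable (by simp) (z t x)).hasFDerivAt.comp_hasDerivAt t (hcurve_t t x)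
    rwa [hgrad] at h1
  have hd1 : HasDerivAt (fun s => S (z s x) + (1 / 2) * (zx (s, x) ⬝ᵥ (K *ᵥ z s x)))
      (gradS (z t x) ⬝ᵥ zt (t, x)
        + (1 / 2) * (w ⬝ᵥ (K *ᵥ z t x) + zx (t, x) ⬝ᵥ (K *ᵥ zt (t, x)))) t := by
    exact hScomp.add ((hasDerivAt_dotK K hzx_t (hcurve_t t x)).const_mul (1 / 2))
  have hd2 : HasDerivAt (fun y => -(1 / 2) * (zt (t, y) ⬝ᵥ (K *ᵥ z t y)))
      (-(1 / 2) * (g'' (0, 1) (1, 0) ⬝ᵥ (K *ᵥ z t x) + zt (t, x) ⬝ᵥ (K *ᵥ zx (t, x)))) x :=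
    (hasDerivAt_dotK K hzt_x (hcurve_x t x)).const_mul (-(1 / 2))
  rw [hfun1, hfun2, hd1.deriv, hd2.deriv, ← hsymm]
  -- the PDE
  have hpde : gradS (z t x) = M *ᵥ zt (t, x) + K *ᵥ zx (t, x) := by
    rw [← heq t x, (hcurve_t t x).deriv, (hcurve_x t x).deriv]
  rw [hpde]
  have h0 : zt (t, x) ⬝ᵥ (M *ᵥ zt (t, x)) = 0 := by
    have := skew_dot hM (zt (t, x)) (zt (t, x)); linarith
  have h1 := skew_dot hK (zx (t, x)) (zt (t, x))
  have h2 : (M *ᵥ zt (t, x) + K *ᵥ zx (t, x)) ⬝ᵥ zt (t, x)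
      = zt (t, x) ⬝ᵥ (M *ᵥ zt (t, x)) + zt (t, x) ⬝ᵥ (K *ᵥ zx (t, x)) := by
    rw [add_dotProduct, dotProduct_comm (M *ᵥ zt (t, x)),
      dotProduct_comm (K *ᵥ zx (t, x))]
  rw [h2, h0]
  ring_nf
  linarith
end

section
/- Let M, K be real skew-symmetric d×d matrices, S : ℝ^d → ℝ smooth, and z : ℝ² → ℝ^d a smooth solution of M z_t + K z_x = ∇S(z). Then the local momentum conservation law ∂_t I(z) + ∂_x G(z) = 0 holds, where I(z) = −(1/2) z_xᵀ M z and G(z) = S(z) + (1/2) z_tᵀ M z. -/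
open Matrix

-- derivative of a dot product of curves
lemma hasDerivAt_dot {d : ℕ} {a b : ℝ → (Fin d → ℝ)} {a' b' : Fin d → ℝ} {t : ℝ}
    (ha : HasDerivAt a a' t) (hb : HasDerivAt b b' t) :
    HasDerivAt (fun s => a s ⬝ᵥ b s) (a' ⬝ᵥ b t + a t ⬝ᵥ b') t := by
  simp only [dotProduct]
  rw [← Finset.sum_add_distrib]
  apply HasDerivAt.fun_sum
  intro i _
  have hai : HasDerivAt (fun s => a s i) (a' i) t :=
    ((ContinuousLinearMap.proj (R := ℝ) (φ := fun _ : Fin d => ℝ) i).hasFDerivAt).comp_hasDerivAt t ha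
  have hbi : HasDerivAt (fun s => b s i) (b' i) t :=
    ((ContinuousLinearMap.proj (R := ℝ) (φ := fun _ : Fin d => ℝ) i).hasFDerivAt).comp_hasDerivAt t hb
  simpa [mul_comm] using hai.fun_mul hbi

lemma skew_dot_s15 {d : ℕ} {M : Matrix (Fin d) (Fin d) ℝ} (hM : Mᵀ = -M)
    (a b : Fin d → ℝ) : a ⬝ᵥ (M *ᵥ b) = -(b ⬝ᵥ (M *ᵥ a)) := by
  rw [dotProduct_mulVec, ← mulVec_transpose, hM, neg_mulVec]
  simp [dotProduct_comm]

theorem multisymplectic_local_momentum_conservation (d : ℕ)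
    (M K : Matrix (Fin d) (Fin d) ℝ) (hM : Mᵀ = -M) (hK : Kᵀ = -K)
    (S : (Fin d → ℝ) → ℝ) (hS : ContDiff ℝ (⊤ : ℕ∞) S)
    (gradS : (Fin d → ℝ) → (Fin d → ℝ))
    (hgrad : ∀ v w, fderiv ℝ S v w = gradS v ⬝ᵥ w)
    (z : ℝ → ℝ → (Fin d → ℝ)) (hz : ContDiff ℝ (⊤ : ℕ∞) (fun p : ℝ × ℝ => z p.1 p.2))
    (heq : ∀ t x,
      M *ᵥ (deriv (fun s => z s x) t) + K *ᵥ (deriv (fun y => z t y) x) = gradS (z t x)) :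
    ∀ t x,
      deriv (fun s => -(1 / 2) * ((deriv (fun y => z s y) x) ⬝ᵥ (M *ᵥ z s x))) t
        + deriv (fun y => S (z t y) +
            (1 / 2) * ((deriv (fun s => z s y) t) ⬝ᵥ (M *ᵥ z t y))) x = 0 := by
  intro t x
  have hfC : ContDiff ℝ (⊤ : ℕ∞) (fun p : ℝ × ℝ => z p.1 p.2) := hz
  set f : ℝ × ℝ → (Fin d → ℝ) := fun p => z p.1 p.2 with hfdef
  have hfdiff : Differentiable ℝ f := hfC.differentiable (by simp)
  have hf'C : ContDiff ℝ (⊤ : ℕ∞) (fderiv ℝ f) := hfC.fderiv_right (by simp)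
  have hf'diff : Differentiable ℝ (fderiv ℝ f) := hf'C.differentiable (by simp)
  have hcv : ∀ (s x0 : ℝ), HasDerivAt (fun s : ℝ => ((s, x0) : ℝ × ℝ)) (1, 0) s :=
    fun s x0 => (hasDerivAt_id s).prodMk (hasDerivAt_const s x0)
  have hch : ∀ (t0 y : ℝ), HasDerivAt (fun y : ℝ => ((t0, y) : ℝ × ℝ)) (0, 1) y :=
    fun t0 y => (hasDerivAt_const y t0).prodMk (hasDerivAt_id y)
  have hzt : ∀ t x, HasDerivAt (fun s => z s x) (fderiv ℝ f (t, x) (1, 0)) t :=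
    fun t x => (hfdiff (t, x)).hasFDerivAt.comp_hasDerivAt (l := f) t (hcv t x)
  have hzx : ∀ t x, HasDerivAt (fun y => z t y) (fderiv ℝ f (t, x) (0, 1)) x :=
    fun t x => (hfdiff (t, x)).hasFDerivAt.comp_hasDerivAt x (hch t x)
  have hsym : fderiv ℝ (fderiv ℝ f) (t, x) (0, 1) (1, 0)
      = fderiv ℝ (fderiv ℝ f) (t, x) (1, 0) (0, 1) :=
    (hfC.contDiffAt.isSymmSndFDerivAt (by simp; exact WithTop.coe_le_coe.mpr (le_top : (2 : ℕ∞) ≤ ⊤))) (0, 1) (1, 0)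
  have hDx : HasDerivAt (fun s => fderiv ℝ f (s, x)) (fderiv ℝ (fderiv ℝ f) (t, x) (1, 0)) t :=
    (hf'diff (t, x)).hasFDerivAt.comp_hasDerivAt t (hcv t x)
  have hw1 : HasDerivAt (fun s => fderiv ℝ f (s, x) (0, 1))
      (fderiv ℝ (fderiv ℝ f) (t, x) (1, 0) (0, 1)) t := by
    simpa using hDx.clm_apply (hasDerivAt_const t ((0, 1) : ℝ × ℝ))
  have hDt : HasDerivAt (fun y => fderiv ℝ f (t, y)) (fderiv ℝ (fderiv ℝ f) (t, x) (0, 1)) x :=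
    (hf'diff (t, x)).hasFDerivAt.comp_hasDerivAt x (hch t x)
  have hw2 : HasDerivAt (fun y => fderiv ℝ f (t, y) (1, 0))
      (fderiv ℝ (fderiv ℝ f) (t, x) (1, 0) (0, 1)) x := by
    simpa [hsym] using hDt.clm_apply (hasDerivAt_const x ((1, 0) : ℝ × ℝ))
  have hMv : ∀ {g : ℝ → (Fin d → ℝ)} {g' : Fin d → ℝ} {s : ℝ}, HasDerivAt g g' s →
      HasDerivAt (fun r => M *ᵥ g r) (M *ᵥ g') s := by
    intro g g' s hg
    simpa [Function.comp_def] using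
      ((Matrix.mulVecLin M).toContinuousLinearMap.hasFDerivAt).comp_hasDerivAt s hg
  -- the three pieces
  have hA : HasDerivAt (fun s => -(1 / 2 : ℝ) * ((deriv (fun y => z s y) x) ⬝ᵥ (M *ᵥ z s x)))
      (-(1 / 2) * ((fderiv ℝ (fderiv ℝ f) (t, x) (1, 0) (0, 1)) ⬝ᵥ (M *ᵥ z t x)
        + (fderiv ℝ f (t, x) (0, 1)) ⬝ᵥ (M *ᵥ fderiv ℝ f (t, x) (1, 0)))) t := by
    apply HasDerivAt.const_mul
    have heqfun : (fun s => (deriv (fun y => z s y) x) ⬝ᵥ (M *ᵥ z s x))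
        = fun s => (fderiv ℝ f (s, x) (0, 1)) ⬝ᵥ (M *ᵥ z s x) := by
      funext s; rw [(hzx s x).deriv]
    rw [heqfun]
    exact hasDerivAt_dot hw1 (hMv (hzt t x))
  have hB : HasDerivAt (fun y => S (z t y))
      ((gradS (z t x)) ⬝ᵥ (fderiv ℝ f (t, x) (0, 1))) x := by
    have := ((hS.differentiable (by simp)) (z t x)).hasFDerivAt.comp_hasDerivAt x (hzx t x)
    rwa [hgrad] at this
  have hC : HasDerivAt (fun y => (deriv (fun s => z s y) t) ⬝ᵥ (M *ᵥ z t y))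
      ((fderiv ℝ (fderiv ℝ f) (t, x) (1, 0) (0, 1)) ⬝ᵥ (M *ᵥ z t x)
        + (fderiv ℝ f (t, x) (1, 0)) ⬝ᵥ (M *ᵥ fderiv ℝ f (t, x) (0, 1))) x := by
    have heqfun : (fun y => (deriv (fun s => z s y) t) ⬝ᵥ (M *ᵥ z t y))
        = fun y => (fderiv ℝ f (t, y) (1, 0)) ⬝ᵥ (M *ᵥ z t y) := by
      funext y; rw [(hzt t y).deriv]
    rw [heqfun]
    exact hasDerivAt_dot hw2 (hMv (hzx t x))
  have hG := hB.fun_add (hC.const_mul (1 / 2 : ℝ))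
  rw [hA.deriv, hG.deriv]
  -- algebra
  have hg : gradS (z t x) = M *ᵥ (fderiv ℝ f (t, x) (1, 0)) + K *ᵥ (fderiv ℝ f (t, x) (0, 1)) := by
    rw [← heq t x, (hzt t x).deriv, (hzx t x).deriv]
  set u := fderiv ℝ f (t, x) (1, 0)
  set v := fderiv ℝ f (t, x) (0, 1)
  set W := (fderiv ℝ (fderiv ℝ f) (t, x) (1, 0) (0, 1)) ⬝ᵥ (M *ᵥ z t x)
  rw [hg, add_dotProduct]
  have hK0 : (K *ᵥ v) ⬝ᵥ v = 0 := by
    have h := skew_dot_s15 hK v v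
    rw [dotProduct_comm] at *
    linarith [skew_dot_s15 hK v v, (dotProduct_comm (K *ᵥ v) v)]
  have hMuv : (M *ᵥ u) ⬝ᵥ v = -(u ⬝ᵥ (M *ᵥ v)) := by
    rw [dotProduct_comm]; exact skew_dot_s15 hM v u
  have hvMu : v ⬝ᵥ (M *ᵥ u) = -(u ⬝ᵥ (M *ᵥ v)) := skew_dot_s15 hM v u
  rw [hK0, hMuv, hvMu]; ring
end
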